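/- Let η > 0 and let g : [0,∞) → ℂ be a smooth, rapidly decreasing (Schwartz-class) function with g′(0) = 0, such that |g(u)|·e^{u(1/2+η)} is dominated by an integrable function on [0,∞), and such that g^{(j)}(u)·e^{u(1/2+η)} is bounded by some integrable function on [0,∞) for j = 1, 2, 3. Then for every ε with 0 < ε < η, the function r ↦ H(r,g) := 2∫₀^∞ cos(ur) g(u) du is well-defined and holomorphic on the strip {r ∈ ℂ : |Im r| < 1/2 + ε}, satisfies H(−r,g) = H(r,g), and there exists a constant C > 0 such that |H(r,g)| ≤ C(1 + |r|)^{−3} for all r in this strip. -/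

import Mathlib

open MeasureTheory Filter Set Topology


lemma norm_cos_le_exp_abs_im (z : ℂ) : ‖Complex.cos z‖ ≤ Real.exp |z.im| := by
  have h1 : ‖Complex.exp (z * Complex.I)‖ ≤ Real.exp |z.im| := by
    rw [Complex.norm_exp]
    apply Real.exp_le_exp.2
    simp [Complex.mul_I_re]
    exact neg_le_abs z.im
  have h2 : ‖Complex.exp (-z * Complex.I)‖ ≤ Real.exp |z.im| := by
    rw [Complex.norm_exp]
    apply Real.exp_le_exp.2
    simp [Complex.mul_I_re]
    exact le_abs_self z.im
  rw [Complex.cos]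
  calc ‖(Complex.exp (z * Complex.I) + Complex.exp (-z * Complex.I)) / 2‖
      = ‖Complex.exp (z * Complex.I) + Complex.exp (-z * Complex.I)‖ / 2 := by
        rw [norm_div]; norm_num
    _ ≤ (Real.exp |z.im| + Real.exp |z.im|) / 2 := by
        gcongr
        exact (norm_add_le _ _).trans (by gcongr)
    _ = Real.exp |z.im| := by ring

lemma norm_sin_le_exp_abs_im (z : ℂ) : ‖Complex.sin z‖ ≤ Real.exp |z.im| := by
  have h1 : ‖Complex.exp (z * Complex.I)‖ ≤ Real.exp |z.im| := by
    rw [Complex.norm_exp]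
    apply Real.exp_le_exp.2
    simp [Complex.mul_I_re]
    exact neg_le_abs z.im
  have h2 : ‖Complex.exp (-z * Complex.I)‖ ≤ Real.exp |z.im| := by
    rw [Complex.norm_exp]
    apply Real.exp_le_exp.2
    simp [Complex.mul_I_re]
    exact le_abs_self z.im
  rw [Complex.sin]
  calc ‖(Complex.exp (-z * Complex.I) - Complex.exp (z * Complex.I)) * Complex.I / 2‖
      = ‖Complex.exp (-z * Complex.I) - Complex.exp (z * Complex.I)‖ / 2 := by
        rw [norm_div, norm_mul]; simp
    _ ≤ (Real.exp |z.im| + Real.exp |z.im|) / 2 := by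
        gcongr
        exact (norm_sub_le _ _).trans (by gcongr)
    _ = Real.exp |z.im| := by ring

lemma hasDerivAt_sin_mul (r : ℂ) (u : ℝ) :
    HasDerivAt (fun u : ℝ => Complex.sin (u * r)) (Complex.cos (u * r) * r) u := by
  have h : HasDerivAt (fun z : ℂ => Complex.sin (z * r)) (Complex.cos ((u : ℂ) * r) * r) (u : ℂ) := by
    simpa [Function.comp_def] using (Complex.hasDerivAt_sin ((u : ℂ) * r)).comp (u : ℂ) ((hasDerivAt_id (u : ℂ)).mul_const r)
  exact h.comp_ofReal

lemma hasDerivAt_cos_mul (r : ℂ) (u : ℝ) :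
    HasDerivAt (fun u : ℝ => Complex.cos (u * r)) (-Complex.sin (u * r) * r) u := by
  have h : HasDerivAt (fun z : ℂ => Complex.cos (z * r)) (-Complex.sin ((u : ℂ) * r) * r) (u : ℂ) := by
    simpa [Function.comp_def] using (Complex.hasDerivAt_cos ((u : ℂ) * r)).comp (u : ℂ) ((hasDerivAt_id (u : ℂ)).mul_const r)
  exact h.comp_ofReal

lemma hasDerivAt_cos_param (u : ℝ) (x : ℂ) :
    HasDerivAt (fun x : ℂ => Complex.cos (u * x)) (-Complex.sin (u * x) * u) x := by
  have h := (Complex.hasDerivAt_cos ((u : ℂ) * x)).comp x ((hasDerivAt_id x).const_mul (u : ℂ))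
  have he : (fun x : ℂ => Complex.cos ((u : ℂ) * x)) = Complex.cos ∘ (fun x : ℂ => (u : ℂ) * x) := rfl
  rw [he]
  rw [show -Complex.sin ((u : ℂ) * x) * (u : ℂ) = -Complex.sin ((u : ℂ) * x) * ((u : ℂ) * 1) by ring]
  exact h


lemma integrableOn_of_bound_aux (F : ℝ → ℂ) (G : ℝ → ℝ) (hF : Continuous F)
    (hG : IntegrableOn G (Set.Ici 0)) (hbd : ∀ u : ℝ, 0 ≤ u → ‖F u‖ ≤ G u) :
    IntegrableOn F (Set.Ioi 0) := by
  apply Integrable.mono' (hG.mono_set Set.Ioi_subset_Ici_self) hF.aestronglyMeasurable.restrict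
  rw [ae_restrict_iff' measurableSet_Ioi]
  exact ae_of_all _ fun u hu => hbd u (le_of_lt hu)

lemma integrableOn_trig_mul_aux (b C : ℝ) (hC : 0 ≤ C) (φ f : ℝ → ℂ) (G : ℝ → ℝ)
    (hφ : Continuous φ) (hf : Continuous f) (hG : IntegrableOn G (Set.Ici 0))
    (hφb : ∀ u : ℝ, 0 ≤ u → ‖φ u‖ ≤ C * Real.exp (u * b))
    (hfb : ∀ u : ℝ, 0 ≤ u → ‖f u‖ * Real.exp (u * b) ≤ G u) :
    IntegrableOn (fun u => φ u * f u) (Set.Ioi 0) := by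
  apply integrableOn_of_bound_aux _ (fun u => C * G u) (hφ.mul hf) (hG.const_mul C)
  intro u hu
  calc ‖φ u * f u‖ = ‖φ u‖ * ‖f u‖ := norm_mul _ _
    _ ≤ (C * Real.exp (u * b)) * ‖f u‖ :=
        mul_le_mul_of_nonneg_right (hφb u hu) (norm_nonneg _)
    _ = C * (‖f u‖ * Real.exp (u * b)) := by ring
    _ ≤ C * G u := mul_le_mul_of_nonneg_left (hfb u hu) hC

lemma norm_setIntegral_le_aux (φ f : ℝ → ℂ) (G : ℝ → ℝ) (b : ℝ)
    (hG : IntegrableOn G (Set.Ici 0))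
    (hφb : ∀ u : ℝ, 0 ≤ u → ‖φ u‖ ≤ Real.exp (u * b))
    (hfb : ∀ u : ℝ, 0 ≤ u → ‖f u‖ * Real.exp (u * b) ≤ G u) :
    ‖∫ u in Set.Ioi (0 : ℝ), φ u * f u‖ ≤ ∫ u in Set.Ioi (0 : ℝ), G u := by
  apply norm_integral_le_of_norm_le (hG.mono_set Set.Ioi_subset_Ici_self)
  rw [ae_restrict_iff' measurableSet_Ioi]
  refine ae_of_all _ fun u hu => ?_
  have hu' : 0 ≤ u := le_of_lt hu
  calc ‖φ u * f u‖ = ‖φ u‖ * ‖f u‖ := norm_mul _ _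
    _ ≤ Real.exp (u * b) * ‖f u‖ :=
        mul_le_mul_of_nonneg_right (hφb u hu') (norm_nonneg _)
    _ = ‖f u‖ * Real.exp (u * b) := mul_comm _ _
    _ ≤ G u := hfb u hu'


lemma tendsto_exp_mul_norm_aux (a b : ℝ) (hab : a ≤ b) (f f' : ℝ → ℂ) (G₀ G₁ : ℝ → ℝ)
    (hf : ∀ u : ℝ, HasDerivAt f (f' u) u) (hfc : Continuous f) (hf'c : Continuous f')
    (hG₀ : IntegrableOn G₀ (Set.Ici 0)) (hG₁ : IntegrableOn G₁ (Set.Ici 0))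
    (hb₀ : ∀ u : ℝ, 0 ≤ u → ‖f u‖ * Real.exp (u * b) ≤ G₀ u)
    (hb₁ : ∀ u : ℝ, 0 ≤ u → ‖f' u‖ * Real.exp (u * b) ≤ G₁ u) :
    Tendsto (fun u : ℝ => Real.exp (u * a) * ‖f u‖) atTop (𝓝 0) := by
  set h : ℝ → ℂ := fun u => (Real.exp (u * a) : ℂ) * f u with hh
  set h' : ℝ → ℂ := fun u => ((a * Real.exp (u * a) : ℝ) : ℂ) * f u
      + ((Real.exp (u * a) : ℝ) : ℂ) * f' u with hh'
  have hnh : ∀ u : ℝ, ‖h u‖ = ‖f u‖ * Real.exp (u * a) := by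
    intro u
    simp only [hh]
    simp only [norm_mul, Complex.norm_real, Real.norm_eq_abs, Real.abs_exp]
    ring
  have hexp : ∀ u : ℝ, HasDerivAt (fun u : ℝ => Real.exp (u * a)) (a * Real.exp (u * a)) u := by
    intro u
    have := (Real.hasDerivAt_exp (u * a)).comp u ((hasDerivAt_id u).mul_const a)
    simpa [mul_comm, Function.comp_def] using this
  have hd : ∀ u : ℝ, HasDerivAt h (h' u) u := fun u => ((hexp u).ofReal_comp).mul (hf u)
  have hbound : ∀ u : ℝ, 0 ≤ u → ‖h' u‖ ≤ |a| * G₀ u + G₁ u := by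
    intro u hu
    have e1 : Real.exp (u * a) ≤ Real.exp (u * b) :=
      Real.exp_le_exp.2 (by nlinarith)
    have e0 : ‖f u‖ * Real.exp (u * a) ≤ G₀ u :=
      le_trans (by nlinarith [norm_nonneg (f u)]) (hb₀ u hu)
    have e0' : ‖f' u‖ * Real.exp (u * a) ≤ G₁ u :=
      le_trans (by nlinarith [norm_nonneg (f' u)]) (hb₁ u hu)
    have n1 : ‖((a * Real.exp (u * a) : ℝ) : ℂ) * f u‖
        = |a| * (‖f u‖ * Real.exp (u * a)) := by
      simp only [norm_mul, Complex.norm_real, Real.norm_eq_abs, abs_mul, Real.abs_exp]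
      ring
    have n2 : ‖((Real.exp (u * a) : ℝ) : ℂ) * f' u‖ = ‖f' u‖ * Real.exp (u * a) := by
      simp only [norm_mul, Complex.norm_real, Real.norm_eq_abs, Real.abs_exp]
      ring
    calc ‖h' u‖ ≤ ‖((a * Real.exp (u * a) : ℝ) : ℂ) * f u‖
          + ‖((Real.exp (u * a) : ℝ) : ℂ) * f' u‖ := norm_add_le _ _
      _ = |a| * (‖f u‖ * Real.exp (u * a)) + ‖f' u‖ * Real.exp (u * a) := by rw [n1, n2]
      _ ≤ |a| * G₀ u + G₁ u :=
          add_le_add (mul_le_mul_of_nonneg_left e0 (abs_nonneg a)) e0'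
  have hh'c : Continuous h' := by
    apply Continuous.add
    · exact (Complex.continuous_ofReal.comp (continuous_const.mul
        (Real.continuous_exp.comp (continuous_id.mul continuous_const)))).mul hfc
    · exact (Complex.continuous_ofReal.comp
        (Real.continuous_exp.comp (continuous_id.mul continuous_const))).mul hf'c
  have h'int : IntegrableOn h' (Set.Ioi 0) :=
    integrableOn_of_bound_aux h' (fun u => |a| * G₀ u + G₁ u) hh'c
      ((hG₀.const_mul |a|).add hG₁) hbound
  have hlim : Tendsto h atTop (𝓝 (limUnder atTop h)) :=
    tendsto_limUnder_of_hasDerivAt_of_integrableOn_Ioi (fun x _ => hd x) h'int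
  have hL0 : limUnder atTop h = 0 := by
    by_contra hne
    have hnorm : Tendsto (fun u => ‖h u‖) atTop (𝓝 ‖limUnder atTop h‖) := hlim.norm
    have hpos : 0 < ‖limUnder atTop h‖ := norm_pos_iff.2 hne
    have hev : ∀ᶠ u in atTop, ‖limUnder atTop h‖ / 2 ≤ ‖h u‖ :=
      hnorm.eventually (eventually_ge_nhds (by linarith))
    have hev2 : ∀ᶠ u in atTop, (0 : ℝ) ≤ u := eventually_ge_atTop 0
    obtain ⟨M, hM⟩ := (hev.and hev2).exists_forall_of_atTop
    set M' := max M 0 with hM'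
    set c := ‖limUnder atTop h‖ / 2 with hc
    have key : ∀ u ∈ Set.Ici M', c ≤ G₀ u := by
      intro u hu
      have hu0 : (0 : ℝ) ≤ u := le_trans (le_max_right M 0) hu
      have huM : M ≤ u := le_trans (le_max_left M 0) hu
      have h1 := (hM u huM).1
      rw [hnh u] at h1
      have e1 : Real.exp (u * a) ≤ Real.exp (u * b) :=
        Real.exp_le_exp.2 (by nlinarith)
      have : c ≤ ‖f u‖ * Real.exp (u * b) := by
        nlinarith [norm_nonneg (f u)]
      exact this.trans (hb₀ u hu0)
    have hGi : IntegrableOn G₀ (Set.Ici M') :=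
      hG₀.mono_set (Set.Ici_subset_Ici.2 (le_max_right M 0))
    have hconst : Integrable (fun _ : ℝ => c) (volume.restrict (Set.Ici M')) := by
      apply Integrable.mono' hGi aestronglyMeasurable_const
      rw [ae_restrict_iff' measurableSet_Ici]
      refine ae_of_all _ fun u hu => ?_
      rw [Real.norm_eq_abs, abs_of_nonneg (by positivity)]
      exact key u hu
    rw [integrable_const_iff] at hconst
    rcases hconst with h0 | h0
    · rw [hc] at h0
      exact absurd h0 (by positivity)
    · have h0' := h0.measure_univ_lt_top
      rw [Measure.restrict_apply_univ, Real.volume_Ici] at h0'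
      exact absurd h0' (by simp)
  rw [hL0] at hlim
  have hn := hlim.norm
  simp only [norm_zero] at hn
  have heq : (fun u => ‖h u‖) = fun u : ℝ => Real.exp (u * a) * ‖f u‖ :=
    funext fun u => by rw [hnh u]; ring
  rwa [heq] at hn

lemma ibp_aux (φ ψ f f' : ℝ → ℂ)
    (hφc : Continuous φ) (hfc : Continuous f)
    (hφ : ∀ u : ℝ, HasDerivAt φ (ψ u) u) (hf : ∀ u : ℝ, HasDerivAt f (f' u) u)
    (h1 : IntegrableOn (fun u => ψ u * f u) (Set.Ioi 0))
    (h2 : IntegrableOn (fun u => φ u * f' u) (Set.Ioi 0))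
    (hlim : Tendsto (fun u => φ u * f u) atTop (𝓝 0)) :
    (∫ u in Set.Ioi (0 : ℝ), ψ u * f u) + ∫ u in Set.Ioi (0 : ℝ), φ u * f' u
      = -(φ 0 * f 0) := by
  have key := integral_Ioi_of_hasDerivAt_of_tendsto
    (f := fun u => φ u * f u) (f' := fun u => ψ u * f u + φ u * f' u) (a := 0) (m := 0)
    ((hφc.mul hfc).continuousWithinAt)
    (fun x _ => (hφ x).mul (hf x)) (h1.add h2) hlim
  rw [integral_add h1 h2, zero_sub] at key
  exact key


/-- `H(r,g) := 2 ∫₀^∞ cos(ur) g(u) du`. -/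
noncomputable def waveH (r : ℂ) (g : ℝ → ℂ) : ℂ :=
  2 * ∫ u in Set.Ioi (0 : ℝ), Complex.cos (u * r) * g u

theorem statement1 (η : ℝ) (hη : 0 < η) (g : ℝ → ℂ)
    (hsmooth : ContDiff ℝ (⊤ : ℕ∞) g)
    (hschwartz : ∀ k n : ℕ, ∃ C : ℝ, ∀ u : ℝ, 0 ≤ u → u ^ k * ‖iteratedDeriv n g u‖ ≤ C)
    (hg'0 : deriv g 0 = 0)
    (hdom : ∃ G : ℝ → ℝ, IntegrableOn G (Set.Ici 0) ∧
      ∀ u : ℝ, 0 ≤ u → ‖g u‖ * Real.exp (u * (1 / 2 + η)) ≤ G u)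
    (hderiv : ∀ j, 1 ≤ j → j ≤ 3 → ∃ G : ℝ → ℝ, IntegrableOn G (Set.Ici 0) ∧
      ∀ u : ℝ, 0 ≤ u → ‖iteratedDeriv j g u‖ * Real.exp (u * (1 / 2 + η)) ≤ G u)
    (ε : ℝ) (hε : 0 < ε) (hεη : ε < η) :
    (∀ r : ℂ, |r.im| < 1 / 2 + ε →
        IntegrableOn (fun u : ℝ => Complex.cos (u * r) * g u) (Set.Ioi 0)) ∧
    DifferentiableOn ℂ (fun r => waveH r g) {r : ℂ | |r.im| < 1 / 2 + ε} ∧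
    (∀ r : ℂ, |r.im| < 1 / 2 + ε → waveH (-r) g = waveH r g) ∧
    (∃ C : ℝ, 0 < C ∧ ∀ r : ℂ, |r.im| < 1 / 2 + ε →
        ‖waveH r g‖ ≤ C / (1 + ‖r‖) ^ 3) := by
  obtain ⟨G₀, hG₀i, hG₀b⟩ := hdom
  obtain ⟨G₁, hG₁i, hG₁b⟩ := hderiv 1 le_rfl (by norm_num)
  obtain ⟨G₂, hG₂i, hG₂b⟩ := hderiv 2 (by norm_num) (by norm_num)
  obtain ⟨G₃, hG₃i, hG₃b⟩ := hderiv 3 (by norm_num) le_rfl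
  set b : ℝ := 1 / 2 + η with hbdef
  set a : ℝ := 1 / 2 + ε with hadef
  have hab : a ≤ b := by rw [hadef, hbdef]; linarith
  -- smoothness facts
  have hsm : ContDiff ℝ ((⊤ : ℕ∞) : WithTop ℕ∞) g := hsmooth.of_le (by simp)
  have hCd : ∀ n : ℕ, ContDiff ℝ ((⊤ : ℕ∞) : WithTop ℕ∞) (iteratedDeriv n g) := by
    intro n
    rw [iteratedDeriv_eq_iterate]
    exact hsm.iterate_deriv n
  have hcont : ∀ n : ℕ, Continuous (iteratedDeriv n g) := fun n => (hCd n).continuous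
  have hgc : Continuous g := hsmooth.continuous
  have hder : ∀ (n : ℕ) (u : ℝ), HasDerivAt (iteratedDeriv n g) (iteratedDeriv (n + 1) g u) u := by
    intro n u
    rw [iteratedDeriv_succ]
    exact (((hCd n).differentiable (by simp)) u).hasDerivAt
  have hg0 : iteratedDeriv 0 g = g := iteratedDeriv_zero
  have hder0 : ∀ u : ℝ, HasDerivAt g (iteratedDeriv 1 g u) u := by
    intro u; have := hder 0 u; rwa [hg0] at this
  have hf10 : iteratedDeriv 1 g 0 = 0 := by rw [iteratedDeriv_one]; exact hg'0
  -- trig bounds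
  have trig_cos : ∀ (r : ℂ) (c : ℝ), |r.im| ≤ c → ∀ u : ℝ, 0 ≤ u →
      ‖Complex.cos (u * r)‖ ≤ Real.exp (u * c) := by
    intro r c hc u hu
    refine (norm_cos_le_exp_abs_im _).trans (Real.exp_le_exp.2 ?_)
    have him : ((u : ℂ) * r).im = u * r.im := by simp [Complex.mul_im]
    rw [him, abs_mul, abs_of_nonneg hu]
    exact mul_le_mul_of_nonneg_left hc hu
  have trig_sin : ∀ (r : ℂ) (c : ℝ), |r.im| ≤ c → ∀ u : ℝ, 0 ≤ u →
      ‖Complex.sin (u * r)‖ ≤ Real.exp (u * c) := by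
    intro r c hc u hu
    refine (norm_sin_le_exp_abs_im _).trans (Real.exp_le_exp.2 ?_)
    have him : ((u : ℂ) * r).im = u * r.im := by simp [Complex.mul_im]
    rw [him, abs_mul, abs_of_nonneg hu]
    exact mul_le_mul_of_nonneg_left hc hu
  have hcosc : ∀ r : ℂ, Continuous fun u : ℝ => Complex.cos (u * r) := fun r =>
    Complex.continuous_cos.comp (Complex.continuous_ofReal.mul continuous_const)
  have hsinc : ∀ r : ℂ, Continuous fun u : ℝ => Complex.sin (u * r) := fun r =>
    Complex.continuous_sin.comp (Complex.continuous_ofReal.mul continuous_const)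
  -- Part 1 : integrability
  have part1 : ∀ r : ℂ, |r.im| < 1 / 2 + ε →
      IntegrableOn (fun u : ℝ => Complex.cos (u * r) * g u) (Set.Ioi 0) := by
    intro r hr
    have hrb : |r.im| ≤ b := le_trans hr.le hab
    apply integrableOn_trig_mul_aux b 1 zero_le_one _ _ G₀ (hcosc r) hgc hG₀i
    · intro u hu; rw [one_mul]; exact trig_cos r b hrb u hu
    · exact hG₀b
  refine ⟨part1, ?_, ?_, ?_⟩
  · -- Part 2 : holomorphy
    intro r₀ hr₀
    simp only [Set.mem_setOf_eq] at hr₀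
    set a' : ℝ := 1 / 2 + (ε + η) / 2 with ha'def
    have ha'b : a' < b := by rw [ha'def, hbdef]; linarith
    have hδpos : 0 < a' - |r₀.im| := by
      have : |r₀.im| < a' := lt_of_lt_of_le hr₀ (by rw [ha'def]; linarith)
      linarith
    have hδ''pos : 0 < b - a' := by linarith
    have hbb : ∀ᵐ (u : ℝ) ∂(volume.restrict (Set.Ioi (0:ℝ))), ∀ x ∈ Metric.ball r₀ (a' - |r₀.im|),
        ‖(-Complex.sin (u * x) * (u : ℂ)) * g u‖ ≤ (1 / (b - a')) * G₀ u := by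
      rw [ae_restrict_iff' measurableSet_Ioi]
      refine ae_of_all _ fun u hu x hx => ?_
      have hu0 : (0 : ℝ) ≤ u := le_of_lt hu
      have hxim : |x.im| ≤ a' := by
        have h1 : |x.im - r₀.im| ≤ ‖x - r₀‖ := by
          simpa using Complex.abs_im_le_norm (x - r₀)
        have h2 : ‖x - r₀‖ < a' - |r₀.im| := by
          rwa [Metric.mem_ball, dist_eq_norm] at hx
        have h3 : |x.im| ≤ |r₀.im| + |x.im - r₀.im| := by
          have := abs_add_le r₀.im (x.im - r₀.im)
          simpa using this
        linarith
      have hsin : ‖Complex.sin (u * x)‖ ≤ Real.exp (u * a') := trig_sin x a' hxim u hu0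
      have hgb := hG₀b u hu0
      have hexpk : u * Real.exp (u * a') ≤ (1 / (b - a')) * Real.exp (u * b) := by
        have h4 : u * (b - a') ≤ Real.exp (u * (b - a')) :=
          le_trans (by linarith [Real.add_one_le_exp (u * (b - a'))]) le_rfl
        have h5 : u ≤ Real.exp (u * (b - a')) / (b - a') := by
          rw [le_div_iff₀ hδ''pos]; nlinarith [Real.add_one_le_exp (u * (b - a'))]
        have h6 : u * Real.exp (u * a') ≤ (Real.exp (u * (b - a')) / (b - a')) * Real.exp (u * a') :=
          mul_le_mul_of_nonneg_right h5 (Real.exp_pos _).le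
        calc u * Real.exp (u * a') ≤ (Real.exp (u * (b - a')) / (b - a')) * Real.exp (u * a') := h6
          _ = (1 / (b - a')) * (Real.exp (u * (b - a')) * Real.exp (u * a')) := by ring
          _ = (1 / (b - a')) * Real.exp (u * b) := by rw [← Real.exp_add]; ring_nf
      calc ‖(-Complex.sin (u * x) * (u : ℂ)) * g u‖
          = ‖Complex.sin (u * x)‖ * u * ‖g u‖ := by
            rw [norm_mul, norm_mul, norm_neg, Complex.norm_real, Real.norm_eq_abs,
              abs_of_nonneg hu0]
        _ ≤ Real.exp (u * a') * u * ‖g u‖ := by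
            apply mul_le_mul_of_nonneg_right _ (norm_nonneg _)
            exact mul_le_mul_of_nonneg_right hsin hu0
        _ = (u * Real.exp (u * a')) * ‖g u‖ := by ring
        _ ≤ ((1 / (b - a')) * Real.exp (u * b)) * ‖g u‖ :=
            mul_le_mul_of_nonneg_right hexpk (norm_nonneg _)
        _ = (1 / (b - a')) * (‖g u‖ * Real.exp (u * b)) := by ring
        _ ≤ (1 / (b - a')) * G₀ u :=
            mul_le_mul_of_nonneg_left hgb (by positivity)
    have hbi : Integrable (fun u => (1 / (b - a')) * G₀ u) (volume.restrict (Set.Ioi (0:ℝ))) :=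
      (hG₀i.mono_set Set.Ioi_subset_Ici_self).const_mul _
    have hdd : ∀ᵐ (u : ℝ) ∂(volume.restrict (Set.Ioi (0:ℝ))), ∀ x ∈ Metric.ball r₀ (a' - |r₀.im|),
        HasDerivAt (fun x : ℂ => Complex.cos (u * x) * g u) ((-Complex.sin (u * x) * (u : ℂ)) * g u) x :=
      ae_of_all _ fun u x _ => (hasDerivAt_cos_param u x).mul_const (g u)
    have key := hasDerivAt_integral_of_dominated_loc_of_deriv_le
      (μ := volume.restrict (Set.Ioi 0)) (𝕜 := ℂ)
      (F := fun (x : ℂ) (u : ℝ) => Complex.cos (u * x) * g u)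
      (F' := fun (x : ℂ) (u : ℝ) => (-Complex.sin (u * x) * u) * g u)
      (x₀ := r₀) (bound := fun u => (1 / (b - a')) * G₀ u) (s := Metric.ball r₀ (a' - |r₀.im|))
      (Metric.ball_mem_nhds r₀ hδpos)
      (Eventually.of_forall fun x => ((hcosc x).mul hgc).aestronglyMeasurable.restrict)
      (part1 r₀ hr₀)
      ((((hsinc r₀).neg.mul Complex.continuous_ofReal).mul hgc).aestronglyMeasurable.restrict)
      hbb hbi hdd
    have hw : (fun x : ℂ => waveH x g)
        = fun x : ℂ => 2 * ∫ u in Set.Ioi (0 : ℝ), Complex.cos (u * x) * g u := rfl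
    rw [hw]
    exact ((key.2.const_mul (2 : ℂ)).differentiableAt).differentiableWithinAt
  · -- Part 3 : evenness
    intro r _
    simp only [waveH, mul_neg, Complex.cos_neg]
  · -- Part 4 : decay
    set C₀ : ℝ := ∫ u in Set.Ioi (0 : ℝ), G₀ u with hC₀def
    set C₃ : ℝ := ∫ u in Set.Ioi (0 : ℝ), G₃ u with hC₃def
    have hC₀nn : 0 ≤ C₀ := by
      apply setIntegral_nonneg measurableSet_Ioi
      intro u hu
      exact le_trans (mul_nonneg (norm_nonneg _) (Real.exp_pos _).le) (hG₀b u hu.le)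
    have hC₃nn : 0 ≤ C₃ := by
      apply setIntegral_nonneg measurableSet_Ioi
      intro u hu
      exact le_trans (mul_nonneg (norm_nonneg _) (Real.exp_pos _).le) (hG₃b u hu.le)
    refine ⟨16 * (C₀ + C₃) + 1, by positivity, ?_⟩
    intro r hr
    have hra : |r.im| ≤ a := hr.le
    have hrb : |r.im| ≤ b := le_trans hra hab
    -- integrabilities
    have hIc0 : IntegrableOn (fun u : ℝ => Complex.cos (u * r) * g u) (Set.Ioi 0) :=
      part1 r hr
    have hIs1 : IntegrableOn (fun u : ℝ => Complex.sin (u * r) * iteratedDeriv 1 g u)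
        (Set.Ioi 0) := by
      apply integrableOn_trig_mul_aux b 1 zero_le_one _ _ G₁ (hsinc r) (hcont 1) hG₁i
      · intro u hu; rw [one_mul]; exact trig_sin r b hrb u hu
      · exact hG₁b
    have hIc2 : IntegrableOn (fun u : ℝ => Complex.cos (u * r) * iteratedDeriv 2 g u)
        (Set.Ioi 0) := by
      apply integrableOn_trig_mul_aux b 1 zero_le_one _ _ G₂ (hcosc r) (hcont 2) hG₂i
      · intro u hu; rw [one_mul]; exact trig_cos r b hrb u hu
      · exact hG₂b
    have hIs3 : IntegrableOn (fun u : ℝ => Complex.sin (u * r) * iteratedDeriv 3 g u)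
        (Set.Ioi 0) := by
      apply integrableOn_trig_mul_aux b 1 zero_le_one _ _ G₃ (hsinc r) (hcont 3) hG₃i
      · intro u hu; rw [one_mul]; exact trig_sin r b hrb u hu
      · exact hG₃b
    -- limits
    have lim1 : Tendsto (fun u : ℝ => Complex.sin (u * r) * g u) atTop (𝓝 0) := by
      have base := tendsto_exp_mul_norm_aux a b hab g (iteratedDeriv 1 g) G₀ G₁
        hder0 hgc (hcont 1) hG₀i hG₁i hG₀b hG₁b
      apply squeeze_zero_norm' _ base
      filter_upwards [eventually_ge_atTop (0 : ℝ)] with u hu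
      rw [norm_mul]
      exact mul_le_mul_of_nonneg_right (trig_sin r a hra u hu) (norm_nonneg _)
    have lim2 : Tendsto (fun u : ℝ => Complex.cos (u * r) * iteratedDeriv 1 g u) atTop (𝓝 0) := by
      have base := tendsto_exp_mul_norm_aux a b hab (iteratedDeriv 1 g) (iteratedDeriv 2 g) G₁ G₂
        (hder 1) (hcont 1) (hcont 2) hG₁i hG₂i hG₁b hG₂b
      apply squeeze_zero_norm' _ base
      filter_upwards [eventually_ge_atTop (0 : ℝ)] with u hu
      rw [norm_mul]
      exact mul_le_mul_of_nonneg_right (trig_cos r a hra u hu) (norm_nonneg _)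
    have lim3 : Tendsto (fun u : ℝ => Complex.sin (u * r) * iteratedDeriv 2 g u) atTop (𝓝 0) := by
      have base := tendsto_exp_mul_norm_aux a b hab (iteratedDeriv 2 g) (iteratedDeriv 3 g) G₂ G₃
        (hder 2) (hcont 2) (hcont 3) hG₂i hG₃i hG₂b hG₃b
      apply squeeze_zero_norm' _ base
      filter_upwards [eventually_ge_atTop (0 : ℝ)] with u hu
      rw [norm_mul]
      exact mul_le_mul_of_nonneg_right (trig_sin r a hra u hu) (norm_nonneg _)
    -- integration by parts
    have hrw1 : (fun u : ℝ => (Complex.cos (u * r) * r) * g u)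
        = fun u : ℝ => r * (Complex.cos (u * r) * g u) := by funext u; ring
    have hrw2 : (fun u : ℝ => (-Complex.sin (u * r) * r) * iteratedDeriv 1 g u)
        = fun u : ℝ => (-r) * (Complex.sin (u * r) * iteratedDeriv 1 g u) := by funext u; ring
    have hrw3 : (fun u : ℝ => (Complex.cos (u * r) * r) * iteratedDeriv 2 g u)
        = fun u : ℝ => r * (Complex.cos (u * r) * iteratedDeriv 2 g u) := by funext u; ring
    have e1 := ibp_aux (fun u : ℝ => Complex.sin (u * r)) (fun u : ℝ => Complex.cos (u * r) * r)
      g (iteratedDeriv 1 g) (hsinc r) hgc (hasDerivAt_sin_mul r) hder0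
      (by rw [hrw1]; exact hIc0.const_mul r) hIs1 lim1
    have e2 := ibp_aux (fun u : ℝ => Complex.cos (u * r)) (fun u : ℝ => -Complex.sin (u * r) * r)
      (iteratedDeriv 1 g) (iteratedDeriv 2 g) (hcosc r) (hcont 1) (hasDerivAt_cos_mul r) (hder 1)
      (by rw [hrw2]; exact hIs1.const_mul (-r)) hIc2 lim2
    have e3 := ibp_aux (fun u : ℝ => Complex.sin (u * r)) (fun u : ℝ => Complex.cos (u * r) * r)
      (iteratedDeriv 2 g) (iteratedDeriv 3 g) (hsinc r) (hcont 2) (hasDerivAt_sin_mul r) (hder 2)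
      (by rw [hrw3]; exact hIc2.const_mul r) hIs3 lim3
    rw [hrw1, integral_const_mul] at e1
    rw [hrw2, integral_const_mul] at e2
    rw [hrw3, integral_const_mul] at e3
    simp only [Complex.ofReal_zero, zero_mul, Complex.sin_zero, Complex.cos_zero, hf10,
      mul_zero, one_mul, neg_zero] at e1 e2 e3
    set A : ℂ := ∫ u in Set.Ioi (0 : ℝ), Complex.cos (u * r) * g u with hA
    set B : ℂ := ∫ u in Set.Ioi (0 : ℝ), Complex.sin (u * r) * iteratedDeriv 1 g u with hB
    set Cc : ℂ := ∫ u in Set.Ioi (0 : ℝ), Complex.cos (u * r) * iteratedDeriv 2 g u with hCc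
    set D : ℂ := ∫ u in Set.Ioi (0 : ℝ), Complex.sin (u * r) * iteratedDeriv 3 g u with hD
    -- e1 : r * A + B = 0 ; e2 : -r * B + Cc = 0 ; e3 : r * Cc + D = 0
    have hkey : r ^ 3 * A = D := by linear_combination r ^ 2 * e1 + r * e2 - e3
    have hAle : ‖A‖ ≤ C₀ := by
      rw [hA, hC₀def]
      apply norm_setIntegral_le_aux _ _ _ b hG₀i
      · intro u hu; exact trig_cos r b hrb u hu
      · exact hG₀b
    have hDle : ‖D‖ ≤ C₃ := by
      rw [hD, hC₃def]
      apply norm_setIntegral_le_aux _ _ _ b hG₃i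
      · intro u hu; exact trig_sin r b hrb u hu
      · exact hG₃b
    have hwnorm : ‖waveH r g‖ = 2 * ‖A‖ := by
      rw [show waveH r g = 2 * A from rfl, norm_mul]
      norm_num
    set x : ℝ := ‖r‖ with hx
    have hx0 : 0 ≤ x := norm_nonneg r
    have hpos : (0 : ℝ) < (1 + x) ^ 3 := by positivity
    rw [le_div_iff₀ hpos]
    rcases le_or_gt x 1 with hx1 | hx1
    · have h8 : (1 + x) ^ 3 ≤ 8 := by
        have h := pow_le_pow_left₀ (by positivity : (0:ℝ) ≤ 1 + x)
          (by linarith : 1 + x ≤ 2) 3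
        norm_num at h
        linarith
      have h1 : ‖waveH r g‖ ≤ 2 * C₀ := by rw [hwnorm]; linarith
      calc ‖waveH r g‖ * (1 + x) ^ 3 ≤ (2 * C₀) * 8 :=
            mul_le_mul h1 h8 hpos.le (by positivity)
        _ ≤ 16 * (C₀ + C₃) + 1 := by linarith
    · have hDA : x ^ 3 * ‖A‖ = ‖D‖ := by
        have := congrArg norm hkey
        rwa [norm_mul, norm_pow] at this
      have h2x : (1 + x) ^ 3 ≤ 8 * x ^ 3 := by
        have h := pow_le_pow_left₀ (by positivity : (0:ℝ) ≤ 1 + x)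
          (by linarith : 1 + x ≤ 2 * x) 3
        have h2 : (2 * x) ^ 3 = 8 * x ^ 3 := by ring
        linarith
      have hAx : x ^ 3 * ‖A‖ ≤ C₃ := hDA.le.trans hDle
      rw [hwnorm]
      have c1 : 2 * ‖A‖ * (1 + x) ^ 3 ≤ 2 * ‖A‖ * (8 * x ^ 3) :=
        mul_le_mul_of_nonneg_left h2x (by positivity)
      have c2 : 2 * ‖A‖ * (8 * x ^ 3) = 16 * (x ^ 3 * ‖A‖) := by ring
      linarith
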